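/- arXiv:gr-qc/9903093 — 2 statements merged into one kernel-verified Lean document; each statement's English description precedes it below -/
import Mathlib

section
/- The general solution of the initial-value problem u·cot(θ)·∂x/∂u + ∂x/∂θ + k·cot(θ)·x = H(u, θ), x(1, θ) = F(θ), along the characteristic through (u, θ) with u = sin(θ)/sin(ξ), is x(u,θ) = u^(−k)·F(ξ) + csc^k(θ)·∫₀^(θ−ξ) H(sin(t+ξ)/sin ξ, t+ξ)·sin^k(t+ξ) dt, where ξ = arcsin(sin θ/u); verification: this formula satisfies the PDE where the inversion ξ(u,θ) is well-defined and smooth (i.e., where u ≠ sin θ and the characteristic map is invertible). -/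
/-! Differentiation of the formula along the characteristic field `u cot θ ∂_u + ∂_θ`.
Since `sin ξ = sin θ / u` is constant along it, `ξ = arcsin (sin θ / u)` is a first integral:
the field kills `F ξ`, the weights `u ^ (-k)` and `sin θ ^ (-k)` only produce the term
`-k cot θ` that cancels the zeroth-order term, and the integral `∫_ξ^θ` is hit only through its
upper limit, where the fundamental theorem of calculus returns `H (u, θ) sin θ ^ k`. The one
analytic input is that the integral is jointly differentiable in its base point and upper limit,
which follows by rescaling it to `[0, 1]` and differentiating under the integral sign. -/

open Real Set Metric

theorem differentiableAt_intervalIntegral_of_contDiffOn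
    {E F : Type*} [NormedAddCommGroup E] [NormedSpace ℝ E] [ProperSpace E]
    [NormedAddCommGroup F] [NormedSpace ℝ F] [CompleteSpace F]
    {g : E × ℝ → F} {U : Set (E × ℝ)} (hU : IsOpen U) (hg : ContDiffOn ℝ 1 g U)
    {p₀ : E} {a b : ℝ} (hp₀ : ∀ s ∈ uIcc a b, (p₀, s) ∈ U) :
    DifferentiableAt ℝ (fun p => ∫ s in a..b, g (p, s)) p₀ := by
  have hK₀ : {p₀} ×ˢ uIcc a b ⊆ U := by rintro ⟨p, s⟩ ⟨rfl, hs⟩; exact hp₀ s hs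
  obtain ⟨δ, hδ, hδU⟩ :=
    (isCompact_singleton.prod isCompact_uIcc).exists_cthickening_subset_open hU hK₀
  have hK : closedBall p₀ δ ×ˢ uIcc a b ⊆ U := by
    rintro ⟨p, s⟩ ⟨hp, hs⟩
    refine hδU (mem_cthickening_of_dist_le _ (p₀, s) _ _ ⟨rfl, hs⟩ ?_)
    simpa [Prod.dist_eq] using hp
  have hg' := hg.continuousOn_fderiv_of_isOpen hU le_rfl
  obtain ⟨C, hC⟩ :=
    ((isCompact_closedBall p₀ δ).prod isCompact_uIcc).exists_bound_of_continuousOn (hg'.mono hK)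
  have hslice : ∀ p ∈ closedBall p₀ δ, ContinuousOn (fun s => (p, s)) (uIcc a b) ∧
      MapsTo (fun s => (p, s)) (uIcc a b) U := fun p hp =>
    ⟨by fun_prop, fun s hs => hK ⟨hp, hs⟩⟩
  obtain ⟨hcont₀, hmaps₀⟩ := hslice p₀ (mem_closedBall_self hδ.le)
  refine (intervalIntegral.hasFDerivAt_integral_of_dominated_of_fderiv_le
    (F' := fun p s => (fderiv ℝ g (p, s)).comp (ContinuousLinearMap.inl ℝ E ℝ))
    (bound := fun _ => C * ‖ContinuousLinearMap.inl ℝ E ℝ‖) (ball_mem_nhds p₀ hδ) ?_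
    (hg.continuousOn.comp hcont₀ hmaps₀).intervalIntegrable ?_ ?_ intervalIntegrable_const
    ?_).differentiableAt
  · filter_upwards [ball_mem_nhds p₀ hδ] with p hp
    obtain ⟨hcont, hmaps⟩ := hslice p (ball_subset_closedBall hp)
    exact ((hg.continuousOn.comp hcont hmaps).mono uIoc_subset_uIcc).aestronglyMeasurable
      measurableSet_uIoc
  · exact (((hg'.comp hcont₀ hmaps₀).clm_comp continuousOn_const).mono
      uIoc_subset_uIcc).aestronglyMeasurable measurableSet_uIoc
  · filter_upwards with s hs p hp
    exact (ContinuousLinearMap.opNorm_comp_le _ _).trans (mul_le_mul_of_nonneg_right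
      (hC _ ⟨ball_subset_closedBall hp, uIoc_subset_uIcc hs⟩) (norm_nonneg _))
  · filter_upwards with s hs p hp
    have hU' : U ∈ nhds (p, s) :=
      hU.mem_nhds (hK ⟨ball_subset_closedBall hp, uIoc_subset_uIcc hs⟩)
    exact ((hg.differentiableOn one_ne_zero).differentiableAt hU').hasFDerivAt.comp p
      (hasFDerivAt_prodMk_left p s)

theorem intervalIntegral_eq_sub_smul_integral_zero_one {F : Type*} [NormedAddCommGroup F]
    [NormedSpace ℝ F] (f : ℝ → F) (a b : ℝ) :
    ∫ y in a..b, f y = (b - a) • ∫ s in (0 : ℝ)..1, f ((b - a) * s + a) := by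
  rw [intervalIntegral.smul_integral_comp_mul_add]
  simp

section VariableBaseInterval

variable {F : Type*} [NormedAddCommGroup F] [NormedSpace ℝ F] [CompleteSpace F]
  {G : ℝ × ℝ → F} {V : Set ℝ} {p₀ : ℝ × ℝ}

theorem differentiableAt_intervalIntegral_fst_snd (hVo : IsOpen V) (hVc : Convex ℝ V)
    (hG : ContDiffOn ℝ 1 G (V ×ˢ V)) (h₁ : p₀.1 ∈ V) (h₂ : p₀.2 ∈ V) :
    DifferentiableAt ℝ (fun p : ℝ × ℝ => ∫ y in p.1..p.2, G (p.1, y)) p₀ := by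
  set φ : (ℝ × ℝ) × ℝ → ℝ × ℝ := fun q => (q.1.1, (q.1.2 - q.1.1) * q.2 + q.1.1)
  have hφ : ContDiff ℝ 1 φ := by fun_prop
  simp_rw [intervalIntegral_eq_sub_smul_integral_zero_one (fun y => G (_, y))]
  refine (differentiableAt_snd.sub differentiableAt_fst).smul
    (differentiableAt_intervalIntegral_of_contDiffOn (g := G ∘ φ)
      ((hVo.prod hVo).preimage hφ.continuous) (hG.comp hφ.contDiffOn fun _ h => h) ?_)
  intro s hs
  rw [uIcc_of_le zero_le_one] at hs
  refine ⟨h₁, ?_⟩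
  convert hVc.add_smul_sub_mem h₁ h₂ hs using 1
  simp only [φ, smul_eq_mul]
  ring

theorem fderiv_intervalIntegral_fst_snd_apply_zero_one (hVo : IsOpen V) (hVc : Convex ℝ V)
    (hG : ContDiffOn ℝ 1 G (V ×ˢ V)) (h₁ : p₀.1 ∈ V) (h₂ : p₀.2 ∈ V) :
    fderiv ℝ (fun p : ℝ × ℝ => ∫ y in p.1..p.2, G (p.1, y)) p₀ (0, 1) = G p₀ := by
  obtain ⟨a, b⟩ := p₀
  have hslice : ContinuousOn (fun y => G (a, y)) V :=
    hG.continuousOn.comp (by fun_prop) fun y hy => ⟨h₁, hy⟩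
  have hFTC : HasDerivAt (fun t => ∫ y in a..t, G (a, y)) (G (a, b)) b :=
    intervalIntegral.integral_hasDerivAt_right
      ((hslice.mono (hVc.ordConnected.uIcc_subset h₁ h₂)).intervalIntegrable)
      (hslice.stronglyMeasurableAtFilter hVo b h₂) (hslice.continuousAt (hVo.mem_nhds h₂))
  have hline : HasDerivAt (fun t : ℝ => (a, t)) ((0 : ℝ), (1 : ℝ)) b :=
    (hasDerivAt_const b a).prodMk (hasDerivAt_id b)
  have hJ := (differentiableAt_intervalIntegral_fst_snd hVo hVc hG h₁ h₂).hasFDerivAt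
  exact (hJ.comp_hasDerivAt b hline).unique hFTC

end VariableBaseInterval

theorem arcsin_div_mem_Ioo {a u : ℝ} (ha : 0 < a) (hau : a < u) :
    arcsin (a / u) ∈ Ioo 0 (π / 2) :=
  ⟨arcsin_pos.2 (div_pos ha (ha.trans hau)),
    arcsin_lt_pi_div_two.2 ((div_lt_one (ha.trans hau)).2 hau)⟩

theorem HasFDerivAt.exists_partials_comp_arcsin_sin_div {Ψ : ℝ × ℝ → ℝ}
    {Ψ' : ℝ × ℝ →L[ℝ] ℝ} {u θ : ℝ}
    (hΨ : HasFDerivAt Ψ Ψ' (arcsin (Real.sin θ / u), θ)) (hθ : 0 < Real.sin θ)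
    (hθu : Real.sin θ < u) :
    ∃ du dθ, HasDerivAt (fun v => Ψ (arcsin (Real.sin θ / v), θ)) du u ∧
      HasDerivAt (fun t => Ψ (arcsin (Real.sin t / u), t)) dθ θ ∧
      u * (Real.cos θ / Real.sin θ) * du + dθ = Ψ' (0, 1) := by
  have hu : 0 < u := hθ.trans hθu
  have harcsin := hasDerivAt_arcsin (x := Real.sin θ / u) (by linarith [div_pos hθ hu])
    ((div_lt_one hu).2 hθu).ne
  have hdiv : HasDerivAt (fun v => Real.sin θ / v) (-Real.sin θ / u ^ 2) u := by
    simpa [div_eq_mul_inv] using (hasDerivAt_inv hu.ne').const_mul (Real.sin θ)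
  have hu' : HasDerivAt (fun v => (arcsin (Real.sin θ / v), θ))
      (1 / √(1 - (Real.sin θ / u) ^ 2) * (-Real.sin θ / u ^ 2), (0 : ℝ)) u :=
    (harcsin.comp u hdiv).prodMk (hasDerivAt_const u θ)
  have hθ' : HasDerivAt (fun t => (arcsin (Real.sin t / u), t))
      (1 / √(1 - (Real.sin θ / u) ^ 2) * (Real.cos θ / u), (1 : ℝ)) θ := by
    have hξ := harcsin.comp θ ((Real.hasDerivAt_sin θ).div_const u)
    exact hξ.prodMk (hasDerivAt_id' θ)
  refine ⟨_, _, hΨ.comp_hasDerivAt (f := fun v => (arcsin (Real.sin θ / v), θ)) u hu',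
    hΨ.comp_hasDerivAt (f := fun t => (arcsin (Real.sin t / u), t)) θ hθ', ?_⟩
  rw [← smul_eq_mul, ← map_smul, ← map_add, Prod.smul_mk, smul_eq_mul, Prod.mk_add_mk,
    smul_zero, zero_add]
  congr 2
  field_simp
  ring

/-- The characteristic with foot point `ξ` is `u = sin y / sin ξ`; after `y = t + ξ`,
`characteristicIntegral k H (ξ, θ)` is the integral `∫₀^{θ-ξ} … dt` of the formula. -/
noncomputable def characteristicIntegrand (k : ℝ) (H : ℝ → ℝ → ℝ)
    (p : ℝ × ℝ) : ℝ :=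
  H (sin p.2 / sin p.1) p.2 * sin p.2 ^ k

noncomputable def characteristicIntegral (k : ℝ) (H : ℝ → ℝ → ℝ)
    (p : ℝ × ℝ) : ℝ :=
  ∫ y in p.1..p.2, characteristicIntegrand k H (p.1, y)

section Characteristics

variable {k u θ : ℝ} {H : ℝ → ℝ → ℝ}

theorem contDiffAt_characteristicIntegrand (hH : ContDiff ℝ 1 (fun p : ℝ × ℝ => H p.1 p.2))
    {p : ℝ × ℝ} (h₁ : sin p.1 ≠ 0) (h₂ : sin p.2 ≠ 0) :
    ContDiffAt ℝ 1 (characteristicIntegrand k H) p := by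
  have hq : ContDiffAt ℝ 1 (fun p : ℝ × ℝ => (sin p.2 / sin p.1, p.2)) p :=
    (((contDiff_sin.comp contDiff_snd).contDiffAt).div
      (contDiff_sin.comp contDiff_fst).contDiffAt h₁).prodMk contDiffAt_snd
  exact (hH.contDiffAt.comp p hq).mul
    ((contDiffAt_rpow_const_of_ne h₂).comp p (contDiff_sin.comp contDiff_snd).contDiffAt)

theorem contDiffOn_characteristicIntegrand (hH : ContDiff ℝ 1 (fun p : ℝ × ℝ => H p.1 p.2)) :
    ContDiffOn ℝ 1 (characteristicIntegrand k H) (Ioo 0 π ×ˢ Ioo 0 π) := fun _ hp =>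
  (contDiffAt_characteristicIntegrand hH (sin_pos_of_mem_Ioo hp.1).ne'
    (sin_pos_of_mem_Ioo hp.2).ne').contDiffWithinAt

theorem intervalIntegral_comp_add_eq_characteristicIntegral (k : ℝ) (H : ℝ → ℝ → ℝ)
    (a θ : ℝ) :
    ∫ t in (0 : ℝ)..(θ - a), H (sin (t + a) / sin a) (t + a) * sin (t + a) ^ k =
      characteristicIntegral k H (a, θ) := by
  have h := intervalIntegral.integral_comp_add_right (a := 0) (b := θ - a)
    (fun y => characteristicIntegrand k H (a, y)) a
  rwa [zero_add, sub_add_cancel] at h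

theorem exists_partials_comp_arcsin_sin_div_eq_zero {F : ℝ → ℝ}
    (hF : ContDiffOn ℝ 1 F (Ioo 0 π)) (hθ : 0 < sin θ) (hθu : sin θ < u) :
    ∃ du dθ, HasDerivAt (fun v => F (arcsin (sin θ / v))) du u ∧
      HasDerivAt (fun t => F (arcsin (sin t / u))) dθ θ ∧
      u * (cos θ / sin θ) * du + dθ = 0 := by
  have hξ := Ioo_subset_Ioo_right (half_le_self pi_pos.le) (arcsin_div_mem_Ioo hθ hθu)
  have hFξ : HasFDerivAt (fun p : ℝ × ℝ => F p.1) _ (arcsin (sin θ / u), θ) :=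
    ((hF.differentiableOn one_ne_zero).differentiableAt
      (isOpen_Ioo.mem_nhds hξ)).hasFDerivAt.comp (arcsin (sin θ / u), θ) hasFDerivAt_fst
  simpa using hFξ.exists_partials_comp_arcsin_sin_div hθ hθu

theorem exists_partials_characteristicIntegral
    (hH : ContDiff ℝ 1 (fun p : ℝ × ℝ => H p.1 p.2)) (hθπ : θ ∈ Ioo 0 π) (hθ : 0 < sin θ)
    (hθu : sin θ < u) :
    ∃ du dθ, HasDerivAt (fun v => characteristicIntegral k H (arcsin (sin θ / v), θ)) du u ∧
      HasDerivAt (fun t => characteristicIntegral k H (arcsin (sin t / u), t)) dθ θ ∧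
      u * (cos θ / sin θ) * du + dθ = H u θ * sin θ ^ k := by
  have hξ := Ioo_subset_Ioo_right (half_le_self pi_pos.le) (arcsin_div_mem_Ioo hθ hθu)
  have hG := contDiffOn_characteristicIntegrand (k := k) hH
  obtain ⟨du, dθ, hu, hθ', hL⟩ := (differentiableAt_intervalIntegral_fst_snd isOpen_Ioo
    (convex_Ioo 0 π) hG hξ hθπ).hasFDerivAt.exists_partials_comp_arcsin_sin_div hθ hθu
  refine ⟨du, dθ, hu, hθ', hL.trans ?_⟩
  rw [fderiv_intervalIntegral_fst_snd_apply_zero_one isOpen_Ioo (convex_Ioo 0 π) hG hξ hθπ,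
    characteristicIntegrand, sin_arcsin (by linarith [div_pos hθ (hθ.trans hθu)])
      ((div_lt_one (hθ.trans hθu)).2 hθu).le, div_div_cancel₀ hθ.ne']

end Characteristics

/-- The method-of-characteristics formula
`x(u,θ) = u^(−k)·F(ξ) + csc^k θ·∫₀^{θ−ξ} H(sin(t+ξ)/sin ξ, t+ξ)·sin^k(t+ξ) dt`,
with `ξ = arcsin(sin θ/u)`, solves the initial value problem
`u·cot θ·∂x/∂u + ∂x/∂θ + k·cot θ·x = H(u,θ)`, `x(1,θ) = F(θ)`,
on the domain where `0 < sin θ < u` (so the characteristic map is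
invertible), the initial condition holding for `θ ∈ (0, π/2)`. -/
theorem characteristics_formula_solves_ivp (k : ℝ) (F : ℝ → ℝ) (H : ℝ → ℝ → ℝ)
    (hF : ContDiffOn ℝ 1 F (Set.Ioo 0 π))
    (hH : ContDiff ℝ 1 (fun p : ℝ × ℝ => H p.1 p.2))
    (x : ℝ → ℝ → ℝ)
    (hx : ∀ u θ : ℝ,
      x u θ = u ^ (-k) * F (Real.arcsin (Real.sin θ / u))
        + (Real.sin θ) ^ (-k) *
          ∫ t in (0 : ℝ)..(θ - Real.arcsin (Real.sin θ / u)),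
            H (Real.sin (t + Real.arcsin (Real.sin θ / u)) /
                Real.sin (Real.arcsin (Real.sin θ / u)))
              (t + Real.arcsin (Real.sin θ / u)) *
              (Real.sin (t + Real.arcsin (Real.sin θ / u))) ^ k) :
    (∀ u θ : ℝ, θ ∈ Set.Ioo 0 π → 0 < Real.sin θ → Real.sin θ < u →
      u * (Real.cos θ / Real.sin θ) * deriv (fun v => x v θ) u
        + deriv (fun t => x u t) θ
        + k * (Real.cos θ / Real.sin θ) * x u θ = H u θ) ∧
    (∀ θ : ℝ, θ ∈ Set.Ioo 0 (π / 2) → x 1 θ = F θ) := by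
  have hxJ : ∀ v t, x v t = v ^ (-k) * F (arcsin (sin t / v)) +
      sin t ^ (-k) * characteristicIntegral k H (arcsin (sin t / v), t) := fun v t => by
    rw [hx, intervalIntegral_comp_add_eq_characteristicIntegral]
  refine ⟨fun u θ hθ hs hsu => ?_, fun θ hθ => ?_⟩
  · have hu : 0 < u := hs.trans hsu
    obtain ⟨duF, dθF, huF, hθF, hLF⟩ :=
      exists_partials_comp_arcsin_sin_div_eq_zero hF hs hsu
    obtain ⟨duJ, dθJ, huJ, hθJ, hLJ⟩ :=
      exists_partials_characteristicIntegral (k := k) hH hθ hs hsu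
    set ξ := arcsin (sin θ / u)
    have hxu : HasDerivAt (fun v => x v θ)
        (-k * u ^ (-k - 1) * F ξ + u ^ (-k) * duF + sin θ ^ (-k) * duJ) u := by
      simp only [hxJ]
      exact ((hasDerivAt_rpow_const (Or.inl hu.ne')).mul huF).add (huJ.const_mul _)
    have hxθ : HasDerivAt (fun t => x u t) (u ^ (-k) * dθF + (-k * sin θ ^ (-k - 1) * cos θ *
        characteristicIntegral k H (ξ, θ) + sin θ ^ (-k) * dθJ)) θ := by
      simp only [hxJ]
      exact (hθF.const_mul _).add
        (((hasDerivAt_rpow_const (Or.inl hs.ne')).comp θ (hasDerivAt_sin θ)).mul hθJ)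
    rw [hxu.deriv, hxθ.deriv, hxJ, rpow_sub_one hu.ne', rpow_sub_one hs.ne']
    have hsk : sin θ ^ (-k) * sin θ ^ k = 1 := by rw [← rpow_add hs, neg_add_cancel, rpow_zero]
    have hu1 : u * u⁻¹ = 1 := mul_inv_cancel₀ hu.ne'
    linear_combination u ^ (-k) * hLF + sin θ ^ (-k) * hLJ + H u θ * hsk
      - k * (cos θ / sin θ) * u ^ (-k) * F ξ * hu1
  · have hθ' : arcsin (sin θ) = θ := arcsin_sin (by linarith [hθ.1, pi_pos]) hθ.2.le
    simp [hxJ, hθ', characteristicIntegral]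
end

section
/- If M(u,θ) satisfies the homogeneous boost-rotation mass-aspect constraint u·cot θ·∂_u M + ∂_θ M + 3·cot θ·M = 0 on u > 0, 0 < θ < π, then M(u,θ) = u^{−3}·F(sin θ/u) for some function F; conversely any M of this form with F ∈ C¹ satisfies the constraint. -/
/-!
Along the characteristic curves `θ ↦ (c sin θ, θ)` of the constraint, the derivative of
`u³ M(u, θ)` is `u³` times the constraint operator. Hence solutions are exactly the functions for
which `u³ M` is constant on each curve `sin θ / u = 1 / c`, i.e. `M = u⁻³ F(sin θ / u)`.
-/

open Real

noncomputable def massAspectOperator (p : ℝ) (M : ℝ → ℝ → ℝ) (u θ : ℝ) : ℝ :=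
  u * (cos θ / sin θ) * deriv (fun v => M v θ) u + deriv (M u) θ + p * (cos θ / sin θ) * M u θ

theorem massAspectOperator_rpow_neg_mul_comp_sin_div {p u θ : ℝ} {F : ℝ → ℝ}
    (hF : DifferentiableAt ℝ F (sin θ / u)) (hu : 0 < u) (hθ : sin θ ≠ 0) :
    massAspectOperator p (fun v t => v ^ (-p) * F (sin t / v)) u θ = 0 := by
  have hF' := hF.hasDerivAt
  have hu_deriv : HasDerivAt (fun v => v ^ (-p) * F (sin θ / v))
      (-p * u ^ (-p - 1) * F (sin θ / u) + u ^ (-p) * (deriv F (sin θ / u) * (-sin θ / u ^ 2)))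
      u := by
    refine (hasDerivAt_rpow_const (Or.inl hu.ne')).mul (hF'.comp u ?_)
    convert (hasDerivAt_inv hu.ne').const_mul (sin θ) using 1
    · exact funext fun v => div_eq_mul_inv _ _
    · ring
  have hθ_deriv : HasDerivAt (fun t => u ^ (-p) * F (sin t / u))
      (u ^ (-p) * (deriv F (sin θ / u) * (cos θ / u))) θ :=
    ((hF'.comp θ ((hasDerivAt_sin θ).div_const u))).const_mul _
  rw [massAspectOperator, hu_deriv.deriv, hθ_deriv.deriv, rpow_sub_one hu.ne']
  field_simp
  ring

theorem hasDerivAt_uncurry_comp_graph {M : ℝ → ℝ → ℝ} {γ : ℝ → ℝ} {γ' t : ℝ}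
    (hM : DifferentiableAt ℝ (Function.uncurry M) (γ t, t)) (hγ : HasDerivAt γ γ' t) :
    HasDerivAt (fun s => M (γ s) s)
      (γ' * deriv (fun v => M v t) (γ t) + deriv (M (γ t)) t) t := by
  set L := fderiv ℝ (Function.uncurry M) (γ t, t)
  have hL := hM.hasFDerivAt
  have h_fst : HasDerivAt (fun v => M v t) (L (1, 0)) (γ t) :=
    hL.comp_hasDerivAt (f := fun v => (v, t)) (γ t)
      ((hasDerivAt_id _).prodMk (hasDerivAt_const _ _))
  have h_snd : HasDerivAt (M (γ t)) (L (0, 1)) t :=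
    hL.comp_hasDerivAt (f := fun s => (γ t, s)) t
      ((hasDerivAt_const _ _).prodMk (hasDerivAt_id _))
  have h_graph : HasDerivAt (fun s => M (γ s) s) (L (γ', 1)) t :=
    hL.comp_hasDerivAt (f := fun s => (γ s, s)) t (hγ.prodMk (hasDerivAt_id _))
  have h_split : L (γ', 1) = γ' * L (1, 0) + L (0, 1) := by
    rw [show ((γ', 1) : ℝ × ℝ) = γ' • ((1, 0) : ℝ × ℝ) + (0, 1) by simp, map_add, map_smul,
      smul_eq_mul]
  rwa [h_fst.deriv, h_snd.deriv, ← h_split]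

theorem hasDerivAt_rpow_mul_along_characteristic {p c t : ℝ} {M : ℝ → ℝ → ℝ}
    (hM : DifferentiableAt ℝ (Function.uncurry M) (c * sin t, t)) (hc : 0 < c) (ht : 0 < sin t) :
    HasDerivAt (fun s => (c * sin s) ^ p * M (c * sin s) s)
      ((c * sin t) ^ p * massAspectOperator p M (c * sin t) t) t := by
  have hu : 0 < c * sin t := mul_pos hc ht
  have h_char : HasDerivAt (fun s => c * sin s) (c * cos t) t := (hasDerivAt_sin t).const_mul c
  have h_pow := (hasDerivAt_rpow_const (p := p) (Or.inl hu.ne')).comp t h_char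
  refine (h_pow.mul (hasDerivAt_uncurry_comp_graph hM h_char)).congr_deriv ?_
  rw [rpow_sub_one hu.ne', Function.comp_apply]
  unfold massAspectOperator
  field_simp
  ring

theorem rpow_mul_eq_of_sin_div_eq {p : ℝ} {M : ℝ → ℝ → ℝ}
    (hM : DifferentiableOn ℝ (Function.uncurry M) (Set.Ioi 0 ×ˢ Set.Ioo 0 π))
    (hE : ∀ u θ, 0 < u → θ ∈ Set.Ioo 0 π → massAspectOperator p M u θ = 0)
    {u θ u' θ' : ℝ} (hu : 0 < u) (hθ : θ ∈ Set.Ioo 0 π) (hu' : 0 < u') (hθ' : θ' ∈ Set.Ioo 0 π)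
    (h : sin θ / u = sin θ' / u') :
    u ^ p * M u θ = u' ^ p * M u' θ' := by
  have hs : 0 < sin θ := sin_pos_of_pos_of_lt_pi hθ.1 hθ.2
  have hs' : 0 < sin θ' := sin_pos_of_pos_of_lt_pi hθ'.1 hθ'.2
  set c := u / sin θ
  have hc : 0 < c := div_pos hu hs
  have hcu : c * sin θ = u := div_mul_cancel₀ u hs.ne'
  have hcu' : c * sin θ' = u' := by
    rw [div_eq_div_iff hu.ne' hu'.ne'] at h
    simp only [c]
    field_simp
    linarith
  have h_pos (s : ℝ) (hs : s ∈ Set.Ioo 0 π) : 0 < c * sin s :=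
    mul_pos hc (sin_pos_of_pos_of_lt_pi hs.1 hs.2)
  have h_deriv (s : ℝ) (hs : s ∈ Set.Ioo 0 π) :=
    hasDerivAt_rpow_mul_along_characteristic (p := p)
      ((hM (c * sin s, s) ⟨h_pos s hs, hs⟩).differentiableAt
        ((isOpen_Ioi.prod isOpen_Ioo).mem_nhds ⟨h_pos s hs, hs⟩))
      hc (sin_pos_of_pos_of_lt_pi hs.1 hs.2)
  have h_const := isOpen_Ioo.is_const_of_deriv_eq_zero isPreconnected_Ioo
    (fun s hs => (h_deriv s hs).differentiableAt.differentiableWithinAt)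
    (fun s hs => by rw [(h_deriv s hs).deriv, hE _ _ (h_pos s hs) hs, mul_zero, Pi.zero_apply])
    hθ hθ'
  simpa only [hcu, hcu'] using h_const

theorem exists_eq_rpow_neg_mul_comp_sin_div {p : ℝ} {M : ℝ → ℝ → ℝ}
    (hM : DifferentiableOn ℝ (Function.uncurry M) (Set.Ioi 0 ×ˢ Set.Ioo 0 π))
    (hE : ∀ u θ, 0 < u → θ ∈ Set.Ioo 0 π → massAspectOperator p M u θ = 0) :
    ∃ F : ℝ → ℝ, ∀ u θ, 0 < u → θ ∈ Set.Ioo 0 π → M u θ = u ^ (-p) * F (sin θ / u) := by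
  refine ⟨fun s => s⁻¹ ^ p * M s⁻¹ (π / 2), fun u θ hu hθ => ?_⟩
  have hs : 0 < sin θ := sin_pos_of_pos_of_lt_pi hθ.1 hθ.2
  have hπ : π / 2 ∈ Set.Ioo 0 π := ⟨by positivity, by linarith [pi_pos]⟩
  have h_inv : 0 < (sin θ / u)⁻¹ := by positivity
  beta_reduce
  rw [← rpow_mul_eq_of_sin_div_eq hM hE hu hθ h_inv hπ (by rw [sin_pi_div_two, div_inv_eq_mul,
    one_mul]), rpow_neg hu.le, ← mul_assoc, inv_mul_cancel₀ (rpow_pos_of_pos hu p).ne', one_mul]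

/-- The homogeneous boost-rotation mass-aspect constraint
`u·cot θ·∂_u M + ∂_θ M + 3·cot θ·M = 0` on `{u > 0, 0 < θ < π}` is solved
exactly by `M(u,θ) = u⁻³·F(sin θ/u)`: any `M` of this form with `F ∈ C¹`
satisfies the constraint, and conversely any `C¹` solution is of this
form. -/
theorem mass_aspect_constraint_general_solution :
    (∀ F : ℝ → ℝ, ContDiff ℝ 1 F →
      ∀ u θ : ℝ, 0 < u → θ ∈ Set.Ioo 0 π →
        u * (Real.cos θ / Real.sin θ) *
            deriv (fun v => v ^ (-(3 : ℝ)) * F (Real.sin θ / v)) u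
          + deriv (fun t => u ^ (-(3 : ℝ)) * F (Real.sin t / u)) θ
          + 3 * (Real.cos θ / Real.sin θ) * (u ^ (-(3 : ℝ)) * F (Real.sin θ / u))
          = 0) ∧
    (∀ M : ℝ → ℝ → ℝ,
      ContDiffOn ℝ 1 (fun p : ℝ × ℝ => M p.1 p.2)
        (Set.Ioi 0 ×ˢ Set.Ioo 0 π) →
      (∀ u θ : ℝ, 0 < u → θ ∈ Set.Ioo 0 π →
        u * (Real.cos θ / Real.sin θ) * deriv (fun v => M v θ) u
          + deriv (fun t => M u t) θ
          + 3 * (Real.cos θ / Real.sin θ) * M u θ = 0) →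
      ∃ F : ℝ → ℝ, ∀ u θ : ℝ, 0 < u → θ ∈ Set.Ioo 0 π →
        M u θ = u ^ (-(3 : ℝ)) * F (Real.sin θ / u)) := by
  refine ⟨fun F hF u θ hu hθ => ?_, fun M hM hE => ?_⟩
  · exact massAspectOperator_rpow_neg_mul_comp_sin_div (hF.differentiable one_ne_zero _) hu
      (sin_pos_of_pos_of_lt_pi hθ.1 hθ.2).ne'
  · exact exists_eq_rpow_neg_mul_comp_sin_div (hM.differentiableOn one_ne_zero) hE
end
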